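/- Domain adaptation bound: let ε_S(h) and ε_T(h) denote the expected error of hypothesis h under source distribution S and target distribution T respectively, and let λ = ε_S(h*) + ε_T(h*) where h* minimizes the combined error. Then for every h in hypothesis class H, ε_T(h) ≤ ε_S(h) + (1/2)·d_{HΔH}(S, T) + λ, where d_{HΔH}(S,T) = 2·sup_{A ∈ A_{HΔH}} |P_S(A) - P_T(A)| is the HΔH-divergence. -/

import Mathlib

/-!
Compare `h` with `h*` through the triangle inequality for disagreement:
`ε_T(h) ≤ ε_T(h*) + P_T(h ≠ h*)`. The set `{h ≠ h*}` lies in `A_{HΔH}`, so its `T`-mass is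
at most its `S`-mass plus `d_{HΔH}(S, T) / 2`, and the triangle inequality once more gives
`P_S(h ≠ h*) ≤ ε_S(h) + ε_S(h*)`.
-/

open MeasureTheory

namespace MeasureTheory

variable {α β : Type*} [MeasurableSpace α]

lemma measureReal_setOf_ne_le_add (μ : Measure α) [IsFiniteMeasure μ] (f g k : α → β) :
    μ.real {x | f x ≠ k x} ≤ μ.real {x | f x ≠ g x} + μ.real {x | g x ≠ k x} := by
  have hsub : {x | f x ≠ k x} ⊆ {x | f x ≠ g x} ∪ {x | g x ≠ k x} := by
    intro x hfk
    by_contra! hx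
    simp_all
  exact (measureReal_mono hsub).trans (measureReal_union_le _ _)

lemma bddAbove_range_abs_measureReal_sub {ι : Type*} (μ ν : Measure α)
    [IsZeroOrProbabilityMeasure μ] [IsZeroOrProbabilityMeasure ν] (s : ι → Set α) :
    BddAbove (Set.range fun i => |μ.real (s i) - ν.real (s i)|) := by
  refine ⟨1, ?_⟩
  rintro _ ⟨i, rfl⟩
  exact abs_sub_le_of_nonneg_of_le measureReal_nonneg measureReal_le_one measureReal_nonneg
    measureReal_le_one

end MeasureTheory

theorem stmt17_general {X : Type*} [MeasurableSpace X]
    (S T : Measure (X × Bool)) [IsProbabilityMeasure S] [IsProbabilityMeasure T]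
    (H : Set (X → Bool)) (hHmeas : ∀ h ∈ H, Measurable h)
    (err : Measure (X × Bool) → (X → Bool) → ℝ)
    (herr : ∀ D h, err D h = (D {p : X × Bool | h p.1 ≠ p.2}).toReal)
    (dHH : ℝ)
    (hdHH : dHH = 2 * ⨆ q : H × H,
      |((S.map Prod.fst) {x : X | (q.1 : X → Bool) x ≠ (q.2 : X → Bool) x}).toReal -
        ((T.map Prod.fst) {x : X | (q.1 : X → Bool) x ≠ (q.2 : X → Bool) x}).toReal|)
    (hstar : X → Bool) (hstarH : hstar ∈ H) :
    ∀ h ∈ H, err T h ≤ err S h + dHH / 2 + (err S hstar + err T hstar) := by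
  intro h hH
  have hA : MeasurableSet {x | h x ≠ hstar x} :=
    (measurableSet_eq_fun (hHmeas h hH) (hHmeas hstar hstarH)).compl
  have hdiv : |(S.map Prod.fst).real {x | h x ≠ hstar x} -
      (T.map Prod.fst).real {x | h x ≠ hstar x}| ≤ dHH / 2 := by
    rw [hdHH, mul_div_cancel_left₀ _ two_ne_zero]
    exact le_ciSup (bddAbove_range_abs_measureReal_sub (S.map Prod.fst) (T.map Prod.fst)
      fun q : H × H => {x | (q.1 : X → Bool) x ≠ (q.2 : X → Bool) x})
      ⟨⟨h, hH⟩, ⟨hstar, hstarH⟩⟩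
  rw [map_measureReal_apply measurable_fst hA, map_measureReal_apply measurable_fst hA,
    Set.preimage_ofPred_eq, abs_sub_le_iff] at hdiv
  have hT := measureReal_setOf_ne_le_add T (fun p => h p.1) (fun p => hstar p.1) Prod.snd
  have hS := measureReal_setOf_ne_le_add S (fun p => h p.1) Prod.snd (fun p => hstar p.1)
  rw [show {p : X × Bool | p.2 ≠ hstar p.1} = {p | hstar p.1 ≠ p.2} by simp only [ne_comm]]
    at hS
  simp only [herr, ← measureReal_def]
  linarith [hdiv.2]

/-- Ben-David et al. domain adaptation bound:
ε_T(h) ≤ ε_S(h) + (1/2)·d_{HΔH}(S,T) + λ with λ = ε_S(h*) + ε_T(h*). -/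
theorem stmt17 {X : Type*} [MeasurableSpace X]
    (S T : Measure (X × Bool)) [IsProbabilityMeasure S] [IsProbabilityMeasure T]
    (H : Set (X → Bool)) (hHmeas : ∀ h ∈ H, Measurable h)
    (err : Measure (X × Bool) → (X → Bool) → ℝ)
    (herr : ∀ D h, err D h = (D {p : X × Bool | h p.1 ≠ p.2}).toReal)
    (dHH : ℝ)
    (hdHH : dHH = 2 * ⨆ q : H × H,
      |((S.map Prod.fst) {x : X | (q.1 : X → Bool) x ≠ (q.2 : X → Bool) x}).toReal -
        ((T.map Prod.fst) {x : X | (q.1 : X → Bool) x ≠ (q.2 : X → Bool) x}).toReal|)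
    (hstar : X → Bool) (hstarH : hstar ∈ H)
    (hmin : ∀ h ∈ H, err S hstar + err T hstar ≤ err S h + err T h) :
    ∀ h ∈ H, err T h ≤ err S h + dHH / 2 + (err S hstar + err T hstar) :=
  stmt17_general S T H hHmeas err herr dHH hdHH hstar hstarH
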